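/- Let r > 0, γ > 0, and k ∈ ℕ. Then ∫_{−π}^{π} (r² + γ² + 2γr·cos θ)^k dθ ≤ 2π·(r + γ)^{2k}. If moreover k ≥ 1, then ∫_{−π}^{π} (r² + γ² + 2γr·cos θ)^k dθ ≥ (C₀/√k)·(r + γ)^{2k}, where C₀ = √π·erf(π/2) ≈ 1.7258. -/
import Mathlib

open Real intervalIntegral

/-- The error function `erf z = (2/√π) ∫₀^z e^{-t²} dt`. -/
noncomputable def erf (z : ℝ) : ℝ :=
  2 / Real.sqrt Real.pi * ∫ t in (0 : ℝ)..z, Real.exp (-t ^ 2)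

private lemma exp_neg_c_le : Real.exp (-(Real.pi ^ 2 / 8)) ≤ 1 - Real.pi ^ 2 / 8 / 2 := by
  have hpi : (3.141592 : ℝ) < Real.pi := Real.pi_gt_d6
  have hpi' : Real.pi < 3.141593 := Real.pi_lt_d6
  have h0 : (0:ℝ) < Real.pi := Real.pi_pos
  have hcpos : (0:ℝ) < Real.pi ^ 2 / 8 := by positivity
  set c : ℝ := Real.pi ^ 2 / 8 with hc
  have h1 : c ≤ 1.2338 := by rw [hc]; nlinarith
  have hexp : (1 + c/2)^2 ≤ Real.exp c := by
    have h := Real.add_one_le_exp (c/2)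
    have hpos : (0:ℝ) ≤ 1 + c/2 := by positivity
    calc (1 + c/2)^2 ≤ (Real.exp (c/2))^2 := by nlinarith
      _ = Real.exp c := by rw [sq, ← Real.exp_add]; norm_num
  have hkey : 1 ≤ (1 - c/2) * (1 + c/2)^2 := by
    nlinarith [mul_nonneg hcpos.le (sub_nonneg.mpr h1),
      mul_nonneg (mul_nonneg hcpos.le hcpos.le) (sub_nonneg.mpr h1)]
  have h2 : 1 ≤ (1 - c/2) * Real.exp c := by
    have hb : (0:ℝ) < 1 - c/2 := by nlinarith
    nlinarith
  have hmul : Real.exp (-c) * Real.exp c = 1 := by rw [← Real.exp_add]; simp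
  nlinarith [mul_le_mul_of_nonneg_left h2 (Real.exp_pos (-c)).le, hmul]

private lemma exp_neg_le_one_sub_half {x : ℝ} (hx0 : 0 ≤ x) (hx : x ≤ Real.pi ^ 2 / 8) :
    Real.exp (-x) ≤ 1 - x / 2 := by
  have hcpos : (0:ℝ) < Real.pi ^ 2 / 8 := by positivity
  set c : ℝ := Real.pi ^ 2 / 8 with hc
  have ht0 : 0 ≤ x / c := by positivity
  have ht1 : 0 ≤ 1 - x / c := by
    have : x / c ≤ 1 := (div_le_one hcpos).mpr hx
    linarith
  have hchord := convexOn_exp.2 (Set.mem_univ (-c)) (Set.mem_univ (0:ℝ)) ht0 ht1 (by ring)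
  simp only [smul_eq_mul, mul_zero, add_zero, Real.exp_zero, mul_one] at hchord
  have harg : x / c * -c = -x := by field_simp
  rw [harg] at hchord
  have h4 : x / c * Real.exp (-c) ≤ x / c * (1 - c/2) :=
    mul_le_mul_of_nonneg_left exp_neg_c_le ht0
  have h6 : x / c * (c/2) = x / 2 := by field_simp
  nlinarith

private lemma const_compare {J s q : ℝ} (hJ : 0 ≤ J) (hq : 0 < q) (hs : 0 < s)
    (hsk : s ≤ 2 * q) : 2 * J / q ≤ 2 * (s⁻¹ * (2 * J)) := by
  rw [show s⁻¹ * (2 * J) = 2 * J / s from (div_eq_inv_mul _ _).symm,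
    show (2:ℝ) * (2 * J / s) = 4 * J / s by ring, div_le_div_iff₀ hq hs]
  nlinarith [mul_le_mul_of_nonneg_left hsk hJ]

private lemma exp_neg_sq_le_cos {u : ℝ} (hu : u ^ 2 ≤ Real.pi ^ 2 / 8) :
    Real.exp (-u ^ 2) ≤ Real.cos u :=
  (exp_neg_le_one_sub_half (sq_nonneg u) hu).trans Real.one_sub_sq_div_two_le_cos

/-- For `r, γ > 0`, `∫_{-π}^{π} (r² + γ² + 2γr cos θ)^k dθ ≤ 2π (r+γ)^{2k}`, and, if
`k ≥ 1`, `∫_{-π}^{π} (r² + γ² + 2γr cos θ)^k dθ ≥ (C₀/√k)(r+γ)^{2k}` with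
`C₀ = √π erf(π/2)`. -/
theorem theta_integral_weak_bounds (r γ : ℝ) (hr : 0 < r) (hγ : 0 < γ) (k : ℕ) :
    (∫ θ in (-Real.pi)..Real.pi, (r ^ 2 + γ ^ 2 + 2 * γ * r * Real.cos θ) ^ k) ≤
      2 * Real.pi * (r + γ) ^ (2 * k) ∧
    (1 ≤ k →
      Real.sqrt Real.pi * erf (Real.pi / 2) / Real.sqrt k * (r + γ) ^ (2 * k) ≤
        ∫ θ in (-Real.pi)..Real.pi, (r ^ 2 + γ ^ 2 + 2 * γ * r * Real.cos θ) ^ k) := by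
  have hπ : (0:ℝ) < Real.pi := Real.pi_pos
  have cont1 : Continuous fun θ : ℝ => (r ^ 2 + γ ^ 2 + 2 * γ * r * Real.cos θ) ^ k := by
    fun_prop
  constructor
  · -- upper bound
    have key : ∀ θ ∈ Set.Icc (-Real.pi) Real.pi,
        (r ^ 2 + γ ^ 2 + 2 * γ * r * Real.cos θ) ^ k ≤ (r + γ) ^ (2 * k) := by
      intro θ _
      rw [pow_mul]
      apply pow_le_pow_left₀
      · nlinarith [sq_nonneg (r - γ), mul_pos hγ hr, Real.neg_one_le_cos θ]
      · nlinarith [mul_pos hγ hr, Real.cos_le_one θ]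
    calc (∫ θ in (-Real.pi)..Real.pi, (r ^ 2 + γ ^ 2 + 2 * γ * r * Real.cos θ) ^ k)
        ≤ ∫ _ in (-Real.pi)..Real.pi, (r + γ) ^ (2 * k) :=
          integral_mono_on (by linarith) (cont1.intervalIntegrable _ _)
            intervalIntegrable_const key
      _ = 2 * Real.pi * (r + γ) ^ (2 * k) := by
          rw [integral_const, smul_eq_mul]; ring
  · -- lower bound
    intro hk
    have hk1 : (1:ℝ) ≤ (k:ℝ) := by exact_mod_cast hk
    set s : ℝ := Real.sqrt (2 * k) with hs
    have hs2 : s ^ 2 = 2 * k := Real.sq_sqrt (by positivity)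
    have hs1 : 1 ≤ s := by
      rw [hs, show (1:ℝ) = Real.sqrt 1 by simp]
      exact Real.sqrt_le_sqrt (by linarith)
    have hspos : 0 < s := lt_of_lt_of_le one_pos hs1
    set a : ℝ := Real.pi / (2 * s) with ha
    have hapos : 0 < a := by positivity
    have haπ : a ≤ Real.pi / 2 := by
      rw [ha, div_le_div_iff₀ (by positivity) (by positivity)]
      nlinarith
    set P : ℝ := (r + γ) ^ (2 * k) with hP
    have hPpos : 0 < P := by positivity
    -- pointwise bound on [-π, π]
    have key : ∀ θ ∈ Set.Icc (-Real.pi) Real.pi,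
        P * Real.cos (θ / 2) ^ (2 * k)
          ≤ (r ^ 2 + γ ^ 2 + 2 * γ * r * Real.cos θ) ^ k := by
      intro θ _
      have hcs : Real.cos (θ / 2) ^ 2 = 1 / 2 + Real.cos θ / 2 := by
        rw [Real.cos_sq, show (2:ℝ) * (θ / 2) = θ by ring]
      have hbase : (r + γ) ^ 2 * Real.cos (θ / 2) ^ 2
          ≤ r ^ 2 + γ ^ 2 + 2 * γ * r * Real.cos θ := by
        rw [hcs]; nlinarith [sq_nonneg (r - γ), Real.cos_le_one θ]
      calc P * Real.cos (θ / 2) ^ (2 * k)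
          = ((r + γ) ^ 2 * Real.cos (θ / 2) ^ 2) ^ k := by
            rw [hP, mul_pow, ← pow_mul, ← pow_mul]
        _ ≤ (r ^ 2 + γ ^ 2 + 2 * γ * r * Real.cos θ) ^ k := by
            apply pow_le_pow_left₀ (by positivity) hbase
    have step1 : (∫ θ in (-Real.pi)..Real.pi, P * Real.cos (θ / 2) ^ (2 * k))
        ≤ ∫ θ in (-Real.pi)..Real.pi, (r ^ 2 + γ ^ 2 + 2 * γ * r * Real.cos θ) ^ k :=
      integral_mono_on (by linarith)
        ((by fun_prop : Continuous fun θ : ℝ =>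
          P * Real.cos (θ / 2) ^ (2 * k)).intervalIntegrable _ _)
        (cont1.intervalIntegrable _ _) key
    -- pull out constant and change variable θ = 2u
    have step2 : (∫ θ in (-Real.pi)..Real.pi, P * Real.cos (θ / 2) ^ (2 * k))
        = P * (2 * ∫ u in (-(Real.pi/2))..(Real.pi/2), Real.cos u ^ (2 * k)) := by
      rw [integral_const_mul]
      congr 1
      have h := intervalIntegral.integral_comp_div (a := -Real.pi) (b := Real.pi)
        (f := fun u => Real.cos u ^ (2 * k)) (c := (2:ℝ)) two_ne_zero
      rw [h, smul_eq_mul, neg_div]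
    have hnn : ∀ u : ℝ, 0 ≤ Real.cos u ^ (2 * k) := fun u => (even_two_mul k).pow_nonneg _
    -- shrink to [-a, a]
    have step3 : (∫ u in (-a)..a, Real.cos u ^ (2 * k))
        ≤ ∫ u in (-(Real.pi/2))..(Real.pi/2), Real.cos u ^ (2 * k) := by
      apply integral_mono_interval (by linarith) (by linarith) haπ
      · filter_upwards with u using hnn u
      · exact (by fun_prop : Continuous fun u : ℝ =>
          Real.cos u ^ (2 * k)).intervalIntegrable _ _
    -- compare with gaussian on [-a, a]
    have ha2 : a ^ 2 ≤ Real.pi ^ 2 / 8 := by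
      have h8 : (2 * s) ^ 2 = 8 * k := by rw [mul_pow, hs2]; ring
      rw [ha, div_pow, h8, div_le_div_iff₀ (by positivity) (by norm_num)]
      nlinarith [sq_nonneg Real.pi]
    have step4 : (∫ u in (-a)..a, Real.exp (-u ^ 2) ^ (2 * k))
        ≤ ∫ u in (-a)..a, Real.cos u ^ (2 * k) := by
      apply integral_mono_on (by linarith)
        ((by fun_prop : Continuous fun u : ℝ =>
          Real.exp (-u ^ 2) ^ (2 * k)).intervalIntegrable _ _)
        ((by fun_prop : Continuous fun u : ℝ =>
          Real.cos u ^ (2 * k)).intervalIntegrable _ _)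
      intro u hu
      apply pow_le_pow_left₀ (Real.exp_pos _).le
      exact exp_neg_sq_le_cos ((sq_le_sq' hu.1 hu.2).trans ha2)
    -- change variable t = s u
    set J : ℝ := ∫ t in (0:ℝ)..(Real.pi/2), Real.exp (-t ^ 2) with hJdef
    have hJ : 0 ≤ J := by
      rw [hJdef]
      apply intervalIntegral.integral_nonneg (by linarith)
      intro t _
      exact (Real.exp_pos _).le
    have step5 : (∫ u in (-a)..a, Real.exp (-u ^ 2) ^ (2 * k)) = s⁻¹ * (2 * J) := by
      have hrw : ∀ u : ℝ, Real.exp (-u ^ 2) ^ (2 * k) = Real.exp (-(s * u) ^ 2) := by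
        intro u
        rw [← Real.exp_nat_mul]
        congr 1
        rw [mul_pow, hs2]
        push_cast
        ring
      simp_rw [hrw]
      rw [intervalIntegral.integral_comp_mul_left (f := fun t => Real.exp (-t ^ 2))
        (ne_of_gt hspos)]
      have h1 : s * -a = -(Real.pi/2) := by rw [ha]; field_simp
      have h2 : s * a = Real.pi/2 := by rw [ha]; field_simp
      rw [h1, h2, smul_eq_mul]
      congr 1
      have hneg : (∫ t in (-(Real.pi/2))..(0:ℝ), Real.exp (-t ^ 2))
          = ∫ t in (0:ℝ)..(Real.pi/2), Real.exp (-t ^ 2) := by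
        have h := intervalIntegral.integral_comp_neg (a := (0:ℝ)) (b := Real.pi/2)
          (f := fun t => Real.exp (-t ^ 2))
        simp only [neg_sq, neg_zero] at h
        exact h.symm
      have hsplit := intervalIntegral.integral_add_adjacent_intervals
        (μ := MeasureTheory.volume) (a := -(Real.pi/2)) (b := (0:ℝ)) (c := Real.pi/2)
        (f := fun t => Real.exp (-t ^ 2))
        ((by fun_prop : Continuous fun t : ℝ => Real.exp (-t ^ 2)).intervalIntegrable _ _)
        ((by fun_prop : Continuous fun t : ℝ => Real.exp (-t ^ 2)).intervalIntegrable _ _)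
      rw [← hsplit, hneg, hJdef]
      ring
    clear_value s a P J
    -- comparison of constants
    have hsqk : 0 < Real.sqrt k := Real.sqrt_pos.mpr (by linarith)
    have hsk : s ≤ 2 * Real.sqrt k := by
      have : s = Real.sqrt 2 * Real.sqrt k := by
        rw [hs, Real.sqrt_mul (by norm_num)]
      rw [this]
      have h2 : Real.sqrt 2 ≤ 2 := by
        nlinarith [Real.sq_sqrt (by norm_num : (0:ℝ) ≤ 2), Real.sqrt_nonneg 2]
      nlinarith
    have hconst : 2 * J / Real.sqrt k ≤ 2 * (s⁻¹ * (2 * J)) :=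
      const_compare hJ hsqk hspos hsk
    -- the target equals (2J/√k) * P
    have htarget : Real.sqrt Real.pi * erf (Real.pi / 2) / Real.sqrt k * P
        = 2 * J / Real.sqrt k * P := by
      have hsp : Real.sqrt Real.pi ≠ 0 := ne_of_gt (Real.sqrt_pos.mpr hπ)
      have herf : erf (Real.pi / 2) = 2 / Real.sqrt Real.pi * J := by rw [hJdef]; rfl
      have hcancel : Real.sqrt Real.pi * (2 / Real.sqrt Real.pi * J) = 2 * J := by
        field_simp
      rw [herf, hcancel]
    rw [htarget]
    calc 2 * J / Real.sqrt k * P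
        ≤ 2 * (s⁻¹ * (2 * J)) * P := mul_le_mul_of_nonneg_right hconst hPpos.le
      _ = P * (2 * ∫ u in (-a)..a, Real.exp (-u ^ 2) ^ (2 * k)) := by rw [step5]; ring
      _ ≤ P * (2 * ∫ u in (-a)..a, Real.cos u ^ (2 * k)) := by
          apply mul_le_mul_of_nonneg_left (by linarith) hPpos.le
      _ ≤ P * (2 * ∫ u in (-(Real.pi/2))..(Real.pi/2), Real.cos u ^ (2 * k)) := by
          apply mul_le_mul_of_nonneg_left (by linarith) hPpos.le
      _ = ∫ θ in (-Real.pi)..Real.pi, P * Real.cos (θ / 2) ^ (2 * k) := step2.symm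
      _ ≤ _ := step1
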